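/- arXiv:2504.13911 — 2 statements merged into one kernel-verified Lean document; each statement's English description precedes it below -/
import Mathlib

section
/- Under the root-subgroup data and Levi data hypotheses, one has (V⁻N) ∩ Q = L ∩ N; that is, if an element of Q can be written v⁻n with v⁻ ∈ V⁻ and n ∈ N, then v⁻ = 1 and n ∈ L ∩ N, and conversely every element of L ∩ N lies in (V⁻N) ∩ Q. (Abstract form of the paper's Lemma 'a lemma for Bruhat decomposition'.) -/
open Pointwise

section AxiomaticFramework

variable {G : Type*} [Group G] {ι : Type*}

/-- The subgroup generated by the root subgroups `U α` for `α ∈ s`. -/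
def genU (U : ι → Subgroup G) (s : Finset ι) : Subgroup G := ⨆ α ∈ s, U α

/-- The multiplication map attached to an enumeration `l` of a set of roots is a
bijection from `∏ (K ∩ U α)` onto `K ∩ T`. -/
def ProdBij (U : ι → Subgroup G) (K T : Subgroup G) (l : List ι) : Prop :=
  Function.Injective
    (fun x : ∀ i : Fin l.length, ↥(K ⊓ U (l.get i)) =>
      (List.ofFn fun i => ((x i : G))).prod) ∧
  Set.range
    (fun x : ∀ i : Fin l.length, ↥(K ⊓ U (l.get i)) =>
      (List.ofFn fun i => ((x i : G))).prod)
    = ((K ⊓ T : Subgroup G) : Set G)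

/-- Condition (3.1) for a subgroup `K`, relative to root subgroups `U`,
reduced positive roots `PRp`, reduced negative roots `PRm`, `U⁺ = Up`, `U⁻ = Um`, `N`. -/
def Cond31 (U : ι → Subgroup G) (PRp PRm : Finset ι) (Up Um N K : Subgroup G) : Prop :=
  ((K : Set G) = ↑(K ⊓ Um) * ↑(K ⊓ Up) * ↑(K ⊓ N)) ∧
  ((K : Set G) = ↑(K ⊓ Up) * ↑(K ⊓ Um) * ↑(K ⊓ N)) ∧
  (∀ l : List ι, l.Nodup → (∀ a, a ∈ l ↔ a ∈ PRp) → ProdBij U K Up l) ∧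
  (∀ l : List ι, l.Nodup → (∀ a, a ∈ l ↔ a ∈ PRm) → ProdBij U K Um l)

/-- Condition (3.2) for a subgroup `K`. -/
def Cond32 (Up Um Z K : Subgroup G) : Prop :=
  (K : Set G) = ↑(K ⊓ Up) * ↑(K ⊓ Um) * ↑(K ⊓ Up) * ↑(K ⊓ Z)

/-- Root-subgroup data: a finite set of roots `Phi` with a distinguished subset `PhiRed`
and a partition `Phi = PhiP ⊔ PhiM`, root subgroups `U α`, and subgroups `Z ≤ N`. -/
structure RootData (G : Type*) [Group G] (ι : Type*) [DecidableEq ι] where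
  Phi : Finset ι
  PhiRed : Finset ι
  PhiP : Finset ι
  PhiM : Finset ι
  red_sub : PhiRed ⊆ Phi
  union_eq : PhiP ∪ PhiM = Phi
  disj : Disjoint PhiP PhiM
  U : ι → Subgroup G
  Z : Subgroup G
  N : Subgroup G
  hZN : Z ≤ N

variable [DecidableEq ι]

namespace RootData

variable (D : RootData G ι)

/-- `U⁺`, the subgroup generated by the `U α`, `α ∈ Φ⁺`. -/
def Up : Subgroup G := genU D.U D.PhiP

/-- `U⁻`, the subgroup generated by the `U α`, `α ∈ Φ⁻`. -/
def Um : Subgroup G := genU D.U D.PhiM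

/-- Condition (3.1) with respect to `G`. -/
def cond31 (K : Subgroup G) : Prop :=
  Cond31 D.U (D.PhiRed ∩ D.PhiP) (D.PhiRed ∩ D.PhiM) D.Up D.Um D.N K

/-- Condition (3.2) with respect to `G`. -/
def cond32 (K : Subgroup G) : Prop := Cond32 D.Up D.Um D.Z K

end RootData

/-- Levi data for given root-subgroup data. -/
structure LeviData (D : RootData G ι) where
  PhiJ : Finset ι
  J_sub : PhiJ ⊆ D.Phi
  L : Subgroup G
  Q : Subgroup G
  hZL : D.Z ≤ L
  /-- (i): `U α ≤ L` for `α ∈ Φ_J` -/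
  hUL : ∀ α ∈ PhiJ, D.U α ≤ L
  /-- (i): `U_J⁺ = L ∩ U⁺` is generated by the `U α`, `α ∈ Φ_J⁺` -/
  hUJp : L ⊓ D.Up = genU D.U (PhiJ ∩ D.PhiP)
  /-- (i): `U_J⁻ = L ∩ U⁻` is generated by the `U α`, `α ∈ Φ_J⁻` -/
  hUJm : L ⊓ D.Um = genU D.U (PhiJ ∩ D.PhiM)
  /-- (ii): `L` normalizes `V⁺` -/
  hLnormV : ∀ l ∈ L, ∀ v ∈ genU D.U (D.PhiP \ PhiJ), l * v * l⁻¹ ∈ genU D.U (D.PhiP \ PhiJ)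
  /-- (ii): `V⁺ ∩ L = 1` -/
  hVL : genU D.U (D.PhiP \ PhiJ) ⊓ L = ⊥
  /-- (ii): `Q = V⁺L` -/
  hQ_VL : (Q : Set G) = ↑(genU D.U (D.PhiP \ PhiJ)) * ↑L
  /-- (ii): `Q = LV⁺` -/
  hQ_LV : (Q : Set G) = ↑L * ↑(genU D.U (D.PhiP \ PhiJ))
  /-- (iii): `G = U⁻NU⁺` -/
  bruhat_cover : (↑D.Um * ↑D.N * ↑D.Up : Set G) = Set.univ
  /-- (iii): uniqueness of the `N`-component -/
  bruhat_uniq : ∀ u₁ n₁ v₁ u₂ n₂ v₂ : G, u₁ ∈ D.Um → n₁ ∈ D.N → v₁ ∈ D.Up →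
    u₂ ∈ D.Um → n₂ ∈ D.N → v₂ ∈ D.Up → u₁ * n₁ * v₁ = u₂ * n₂ * v₂ → n₁ = n₂
  /-- (iv): decomposition of `L` -/
  hLdec : (L : Set G) ⊆ ↑(L ⊓ D.Um) * ↑(L ⊓ D.N) * ↑(L ⊓ D.Up)
  /-- (v): `V⁻ ∩ Q = 1` -/
  hVmQ : genU D.U (D.PhiM \ PhiJ) ⊓ Q = ⊥

namespace LeviData

variable {D : RootData G ι} (LD : LeviData D)

/-- `V⁺`, the subgroup generated by the `U α`, `α ∈ Φ⁺ \ Φ_J`. -/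
def Vp : Subgroup G := genU D.U (D.PhiP \ LD.PhiJ)

/-- `V⁻`, the subgroup generated by the `U α`, `α ∈ Φ⁻ \ Φ_J`. -/
def Vm : Subgroup G := genU D.U (D.PhiM \ LD.PhiJ)

/-- Condition (3.1) with respect to the Levi subgroup `L`. -/
def cond31L (K : Subgroup G) : Prop :=
  Cond31 D.U (LD.PhiJ ∩ D.PhiRed ∩ D.PhiP) (LD.PhiJ ∩ D.PhiRed ∩ D.PhiM)
    (LD.L ⊓ D.Up) (LD.L ⊓ D.Um) (D.N ⊓ LD.L) K

/-- Condition (3.2) with respect to the Levi subgroup `L`. -/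
def cond32L (K : Subgroup G) : Prop :=
  Cond32 (LD.L ⊓ D.Up) (LD.L ⊓ D.Um) D.Z K

end LeviData

end AxiomaticFramework

/-!
Write `v * n = l * w` with `l ∈ L`, `w ∈ V⁺` (from `Q = LV⁺`) and decompose `l = a * b * c` along
`U⁻ (L ∩ N) U⁺`. Then `v * n * 1 = a * b * (c * w)` are two `U⁻NU⁺` expressions, so uniqueness of the
`N`-component gives `n = b ∈ L ∩ N`. Hence `v = (v * n) * n⁻¹ ∈ Q ∩ V⁻ = 1`.
-/

section AxiomaticFramework

variable {G : Type*} [Group G] {ι : Type*}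

theorem genU_mono (U : ι → Subgroup G) {s t : Finset ι} (hst : s ⊆ t) :
    genU U s ≤ genU U t :=
  biSup_mono fun _ hα => hst hα

variable [DecidableEq ι] {D : RootData G ι} (LD : LeviData D)

namespace LeviData

theorem Vm_le_Um : LD.Vm ≤ D.Um := genU_mono _ Finset.sdiff_subset

theorem Vp_le_Up : LD.Vp ≤ D.Up := genU_mono _ Finset.sdiff_subset

theorem L_le_Q : LD.L ≤ LD.Q := fun l hl => by
  change l ∈ (LD.Q : Set G)
  rw [LD.hQ_VL]
  exact ⟨1, LD.Vp.one_mem, l, hl, one_mul l⟩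

theorem mem_L_inf_N_of_mul_mem_Q {u n : G} (hu : u ∈ D.Um) (hn : n ∈ D.N)
    (hunQ : u * n ∈ LD.Q) : n ∈ LD.L ⊓ D.N := by
  have hunLV : u * n ∈ (LD.L : Set G) * (LD.Vp : Set G) := LD.hQ_LV ▸ hunQ
  obtain ⟨l, hl, w, hw, hlw⟩ := hunLV
  obtain ⟨_, ⟨a, ha, b, hb, rfl⟩, c, hc, rfl⟩ := LD.hLdec hl
  have hsplit : u * n * 1 = a * b * (c * w) := by
    rw [mul_one, ← hlw]
    simp only [mul_assoc]
  have hnb : n = b := LD.bruhat_uniq u n 1 a b (c * w) hu hn D.Up.one_mem ha.2 hb.2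
    (D.Up.mul_mem hc.2 (LD.Vp_le_Up hw)) hsplit
  exact hnb ▸ hb

theorem eq_one_of_mem_Vm_of_mem_Q {v : G} (hv : v ∈ LD.Vm) (hvQ : v ∈ LD.Q) : v = 1 := by
  have hbot : v ∈ (⊥ : Subgroup G) := LD.hVmQ ▸ (⟨hv, hvQ⟩ : v ∈ LD.Vm ⊓ LD.Q)
  exact hbot

end LeviData

end AxiomaticFramework

/-- Under the root-subgroup data and Levi data hypotheses,
`(V⁻N) ∩ Q = L ∩ N`: any element of `Q` of the form `v⁻ * n` with `v⁻ ∈ V⁻`, `n ∈ N`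
has `v⁻ = 1` and `n ∈ L ∩ N`, and conversely every element of `L ∩ N` lies in
`(V⁻N) ∩ Q`. -/
theorem stmt0 {G : Type*} [Group G] {ι : Type*} [DecidableEq ι]
    (D : RootData G ι) (LD : LeviData D) :
    (∀ v n : G, v ∈ LD.Vm → n ∈ D.N → v * n ∈ LD.Q → v = 1 ∧ n ∈ LD.L ⊓ D.N) ∧
    ((LD.L ⊓ D.N : Subgroup G) : Set G) ⊆
      ((LD.Vm : Set G) * (D.N : Set G)) ∩ (LD.Q : Set G) := by
  refine ⟨fun v n hv hn hvnQ => ?_, fun x hx => ?_⟩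
  · have hnLN := LD.mem_L_inf_N_of_mul_mem_Q (LD.Vm_le_Um hv) hn hvnQ
    have hvQ : v ∈ LD.Q := by
      simpa using LD.Q.mul_mem hvnQ (LD.Q.inv_mem (LD.L_le_Q hnLN.1))
    exact ⟨LD.eq_one_of_mem_Vm_of_mem_Q hv hvQ, hnLN⟩
  · exact ⟨⟨1, LD.Vm.one_mem, x, hx.2, one_mul x⟩, LD.L_le_Q hx.1⟩
end

section
/- Under the root-subgroup data, Levi data, and almost-product data hypotheses, if K_L ≤ L satisfies condition (3.1) with respect to L, then K_L ∩ G_h satisfies condition (3.1) with respect to G_h; if moreover K_L satisfies condition (3.2) with respect to L, then K_L ∩ G_h also satisfies condition (3.2) with respect to G_h. (Abstract form of the paper's Lemma that K_L ∩ G_h(F) inherits both conditions.) -/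
open Pointwise

section AxiomaticFramework

variable {G : Type*} [Group G] {ι : Type*}

variable [DecidableEq ι]

/-- Levi data (weak form): a subset `Φ_J ⊆ Φ` and subgroups `L, Q` with `Z ≤ L`,
`U_α ≤ L` for `α ∈ Φ_J`, and `U_J^± = L ∩ U^±` generated by the `U_α`, `α ∈ Φ_J^±`. -/
structure LeviDataW (D : RootData G ι) where
  PhiJ : Finset ι
  J_sub : PhiJ ⊆ D.Phi
  L : Subgroup G
  Q : Subgroup G
  hZL : D.Z ≤ L
  hUL : ∀ α ∈ PhiJ, D.U α ≤ L
  hUJp : L ⊓ D.Up = genU D.U (PhiJ ∩ D.PhiP)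
  hUJm : L ⊓ D.Um = genU D.U (PhiJ ∩ D.PhiM)

namespace LeviDataW

variable {D : RootData G ι} (LD : LeviDataW D)

/-- Condition (3.1) with respect to the Levi subgroup `L`. -/
def cond31L (K : Subgroup G) : Prop :=
  Cond31 D.U (LD.PhiJ ∩ D.PhiRed ∩ D.PhiP) (LD.PhiJ ∩ D.PhiRed ∩ D.PhiM)
    (LD.L ⊓ D.Up) (LD.L ⊓ D.Um) (D.N ⊓ LD.L) K

/-- Condition (3.2) with respect to the Levi subgroup `L`. -/
def cond32L (K : Subgroup G) : Prop :=
  Cond32 (LD.L ⊓ D.Up) (LD.L ⊓ D.Um) D.Z K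

end LeviDataW

/-- Almost-product data: a normal-factor subgroup `G_h ≤ L` with roots `Φ_h`, a
complementary set of roots `Φ_{l'}`, and a quotient homomorphism `π_l : L → G_l`. -/
structure APData {D : RootData G ι} (LD : LeviDataW D) (Gl : Type*) [Group Gl] where
  Gh : Subgroup G
  hGhL : Gh ≤ LD.L
  PhiH : Finset ι
  PhiL' : Finset ι
  hpartJ : PhiH ∪ PhiL' = LD.PhiJ
  hdisjHL : Disjoint PhiH PhiL'
  hUGh : ∀ α ∈ PhiH, D.U α ≤ Gh
  /-- every element of `U_h⁺U_h⁻` commutes with every element of `U_{l'}⁺U_{l'}⁻` -/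
  hcomm : ∀ x ∈ ((genU D.U (PhiH ∩ D.PhiP) : Subgroup G) : Set G) *
      ((genU D.U (PhiH ∩ D.PhiM) : Subgroup G) : Set G),
      ∀ y ∈ ((genU D.U (PhiL' ∩ D.PhiP) : Subgroup G) : Set G) *
      ((genU D.U (PhiL' ∩ D.PhiM) : Subgroup G) : Set G),
      x * y = y * x
  /-- the quotient homomorphism `π_l : L → G_l` -/
  pil : ↥LD.L →* Gl
  /-- `G_h ⊆ ker π_l` -/
  hGh_ker : ∀ x : ↥LD.L, (x : G) ∈ Gh → pil x = 1
  /-- `Z ∩ ker π_l ⊆ G_h` -/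
  hker_Z : ∀ x : ↥LD.L, (x : G) ∈ D.Z → pil x = 1 → (x : G) ∈ Gh
  /-- `π_l` is injective on `U_{l'}⁺` -/
  hinj_p : ∀ x y : ↥LD.L, (x : G) ∈ genU D.U (PhiL' ∩ D.PhiP) →
      (y : G) ∈ genU D.U (PhiL' ∩ D.PhiP) → pil x = pil y → x = y
  /-- `π_l` is injective on `U_{l'}⁻` -/
  hinj_m : ∀ x y : ↥LD.L, (x : G) ∈ genU D.U (PhiL' ∩ D.PhiM) →
      (y : G) ∈ genU D.U (PhiL' ∩ D.PhiM) → pil x = pil y → x = y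
  /-- `Z_l ⊆ N_l` -/
  hZlNl : (D.Z.subgroupOf LD.L).map pil ≤ ((D.N ⊓ LD.L).subgroupOf LD.L).map pil
  /-- `Z_l` normalizes `U_l⁺` -/
  hZl_norm_p : ∀ z ∈ (D.Z.subgroupOf LD.L).map pil,
      ∀ u ∈ ((genU D.U (PhiL' ∩ D.PhiP)).subgroupOf LD.L).map pil,
      z * u * z⁻¹ ∈ ((genU D.U (PhiL' ∩ D.PhiP)).subgroupOf LD.L).map pil
  /-- `Z_l` normalizes `U_l⁻` -/
  hZl_norm_m : ∀ z ∈ (D.Z.subgroupOf LD.L).map pil,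
      ∀ u ∈ ((genU D.U (PhiL' ∩ D.PhiM)).subgroupOf LD.L).map pil,
      z * u * z⁻¹ ∈ ((genU D.U (PhiL' ∩ D.PhiM)).subgroupOf LD.L).map pil
  /-- in `G_l`, the only solution of `u⁺u⁻n = 1` with `u⁺ ∈ U_l⁺`, `u⁻ ∈ U_l⁻`,
  `n ∈ N_l` is the trivial one -/
  huniq : ∀ up um n : Gl,
      up ∈ ((genU D.U (PhiL' ∩ D.PhiP)).subgroupOf LD.L).map pil →
      um ∈ ((genU D.U (PhiL' ∩ D.PhiM)).subgroupOf LD.L).map pil →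
      n ∈ ((D.N ⊓ LD.L).subgroupOf LD.L).map pil →
      up * um * n = 1 → up = 1 ∧ um = 1 ∧ n = 1

namespace APData

variable {D : RootData G ι} {LD : LeviDataW D} {Gl : Type*} [Group Gl] (AP : APData LD Gl)

/-- Condition (3.1) with respect to the normal subgroup `G_h`. -/
def cond31h (Kh : Subgroup G) : Prop :=
  Cond31 D.U (AP.PhiH ∩ D.PhiRed ∩ D.PhiP) (AP.PhiH ∩ D.PhiRed ∩ D.PhiM)
    (genU D.U (AP.PhiH ∩ D.PhiP)) (genU D.U (AP.PhiH ∩ D.PhiM)) (D.N ⊓ AP.Gh) Kh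

/-- Condition (3.2) with respect to the normal subgroup `G_h`. -/
def cond32h (Kh : Subgroup G) : Prop :=
  Cond32 (genU D.U (AP.PhiH ∩ D.PhiP)) (genU D.U (AP.PhiH ∩ D.PhiM)) (D.Z ⊓ AP.Gh) Kh

end APData

end AxiomaticFramework

/-!
Factor `k ∈ K_L ∩ G_h` as `K_L` is factored. Enumerating the reduced roots of `Φ_J` as those of
`Φ_h` followed by those of `Φ_{l'}`, the product bijection splits every factor from `K_L ∩ U_J^±`
as an `h`-part in `K_L ∩ G_h ∩ U_h^±` times an `l'`-part in `U_{l'}^±`. The two kinds of parts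
commute, so `k` is the product of its `h`-parts and of its `l'`-parts (with the `N`- or
`Z`-factor); the latter product therefore lies in `G_h ⊆ ker π_l`. The uniqueness of
`u⁺u⁻n = 1` in `G_l` and the injectivity of `π_l` on `U_{l'}^±` then make the `l'`-parts cancel:
for (3.1) they are trivial, for (3.2) the middle one is trivial and the outer two are mutually
inverse (after conjugating the relation by the `Z`-factor).
-/

section ListProd

variable {G : Type*} [Group G] {ι : Type*} (U : ι → Subgroup G) (K : Subgroup G)

def listProd {l : List ι} (x : ∀ i : Fin l.length, ↥(K ⊓ U (l.get i))) : G :=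
  (List.ofFn fun i => (x i : G)).prod

variable {U K}

theorem exists_ofFn_coe_eq_iff_forall₂ {l : List ι} {gs : List G} :
    (∃ x : ∀ i : Fin l.length, ↥(K ⊓ U (l.get i)), List.ofFn (fun i => (x i : G)) = gs) ↔
      List.Forall₂ (fun g α => g ∈ K ⊓ U α) gs l := by
  rw [List.forall₂_iff_get]
  constructor
  · rintro ⟨x, rfl⟩
    exact ⟨List.length_ofFn, fun _ _ _ => by simp⟩
  · rintro ⟨hlen, hgs⟩
    refine ⟨fun i => ⟨gs.get (i.cast hlen.symm), hgs _ _ _⟩, List.ext_get (by simp [hlen]) ?_⟩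
    intro n _ _
    simp

theorem listProd_mem {H : Subgroup G} {l : List ι} (hl : ∀ α ∈ l, K ⊓ U α ≤ H)
    (y : ∀ i : Fin l.length, ↥(K ⊓ U (l.get i))) : listProd U K y ∈ H :=
  list_prod_mem fun _ hg => by
    obtain ⟨i, rfl⟩ := List.mem_ofFn.1 hg
    exact hl _ (l.get_mem i) (y i).2

theorem exists_listProd_eq_of_le {K' : Subgroup G} {l : List ι} (hl : ∀ α ∈ l, K ⊓ U α ≤ K')
    (y : ∀ i : Fin l.length, ↥(K ⊓ U (l.get i))) :
    ∃ y' : ∀ i : Fin l.length, ↥(K' ⊓ U (l.get i)), listProd U K' y' = listProd U K y :=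
  ⟨fun i => ⟨y i, hl _ (l.get_mem i) (y i).2, (y i).2.2⟩, rfl⟩

namespace ProdBij

variable {T : Subgroup G} {l m : List ι}

theorem exists_eq_listProd_mul (h : ProdBij U K T (l ++ m)) {u : G} (hu : u ∈ K ⊓ T) :
    ∃ (y : ∀ i : Fin l.length, ↥(K ⊓ U (l.get i))) (z : ∀ j : Fin m.length, ↥(K ⊓ U (m.get j))),
      u = listProd U K y * listProd U K z := by
  obtain ⟨x, rfl⟩ : u ∈ Set.range (listProd U K (l := l ++ m)) := h.2 ▸ hu
  have hx := exists_ofFn_coe_eq_iff_forall₂.1 ⟨x, rfl⟩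
  obtain ⟨y, hy⟩ := exists_ofFn_coe_eq_iff_forall₂.2 (List.forall₂_take_append _ _ _ hx)
  obtain ⟨z, hz⟩ := exists_ofFn_coe_eq_iff_forall₂.2 (List.forall₂_drop_append _ _ _ hx)
  refine ⟨y, z, ?_⟩
  rw [listProd, listProd, listProd, hy, hz, ← List.prod_append, List.take_append_drop]

theorem listProd_injective {K' : Subgroup G} (hK' : K' ≤ K) (h : ProdBij U K T (l ++ m)) :
    Function.Injective (listProd U K' (l := l)) := by
  have pad (y : ∀ i : Fin l.length, ↥(K' ⊓ U (l.get i))) :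
      ∃ x : ∀ i : Fin (l ++ m).length, ↥(K ⊓ U ((l ++ m).get i)),
        List.ofFn (fun i => (x i : G)) = List.ofFn (fun i => (y i : G)) ++ m.map fun _ => 1 := by
    refine exists_ofFn_coe_eq_iff_forall₂.2 (List.rel_append ?_ ?_)
    · exact (exists_ofFn_coe_eq_iff_forall₂.1 ⟨y, rfl⟩).imp fun _ _ hg => inf_le_inf_right _ hK' hg
    · exact List.forall₂_map_left_iff.2 (List.forall₂_same.2 fun _ _ => one_mem _)
  intro y₁ y₂ hy
  obtain ⟨x₁, hx₁⟩ := pad y₁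
  obtain ⟨x₂, hx₂⟩ := pad y₂
  have hx : x₁ = x₂ := h.1 <| by
    simp only [hx₁, hx₂, List.prod_append]
    exact congrArg (· * _) hy
  have hofFn := List.append_cancel_right (hx₁.symm.trans (hx ▸ hx₂))
  funext i
  exact Subtype.ext (congrFun (List.ofFn_injective hofFn) i)

end ProdBij

end ListProd

section Factorization

variable {G : Type*} [Group G]

theorem coe_inf_eq_mul_mul_of_split {K H X Y N N' Xh Yh Xl Yl : Subgroup G}
    (hK : (K : Set G) = ↑(K ⊓ X) * ↑(K ⊓ Y) * ↑(K ⊓ N)) (hN : N ≤ N')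
    (hX : ∀ u ∈ K ⊓ X, ∃ a ∈ K ⊓ H ⊓ Xh, ∃ b ∈ Xl, u = a * b)
    (hY : ∀ u ∈ K ⊓ Y, ∃ a ∈ K ⊓ H ⊓ Yh, ∃ b ∈ Yl, u = a * b)
    (hcomm : ∀ a ∈ Yh, ∀ b ∈ Xl, Commute a b)
    (huniq : ∀ b ∈ Xl, ∀ c ∈ Yl, ∀ n ∈ N, b * c * n ∈ H → b = 1 ∧ c = 1) :
    ((K ⊓ H : Subgroup G) : Set G) = ↑(K ⊓ H ⊓ Xh) * ↑(K ⊓ H ⊓ Yh) * ↑(K ⊓ H ⊓ (N' ⊓ H)) := by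
  refine subset_antisymm (fun k hk => ?_) <| Subgroup.mul_subset
    (Subgroup.mul_subset (fun _ h => h.1) fun _ h => h.1) fun _ h => h.1
  obtain ⟨hkK, hkH⟩ := Subgroup.mem_inf.1 hk
  rw [← SetLike.mem_coe, hK] at hkK
  obtain ⟨_, ⟨u, hu, v, hv, rfl⟩, n, hn, rfl⟩ := hkK
  obtain ⟨a₁, ha₁, b₁, hb₁, rfl⟩ := hX u hu
  obtain ⟨a₂, ha₂, b₂, hb₂, rfl⟩ := hY v hv
  have hk : a₁ * b₁ * (a₂ * b₂) * n = a₁ * a₂ * (b₁ * b₂ * n) := by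
    simp only [mul_assoc, (hcomm a₂ ha₂.2 b₁ hb₁).symm.left_comm]
  have hbn : b₁ * b₂ * n ∈ H := by
    have ha : a₁ * a₂ ∈ H := mul_mem ha₁.1.2 ha₂.1.2
    simpa only [hk, inv_mul_cancel_left] using mul_mem (inv_mem ha) hkH
  obtain ⟨rfl, rfl⟩ := huniq b₁ hb₁ b₂ hb₂ n hn.2 hbn
  simp only [mul_one, one_mul] at hbn ⊢
  exact ⟨a₁ * a₂, ⟨a₁, ha₁, a₂, ha₂, rfl⟩, n, ⟨⟨hn.1, hbn⟩, hN hn.2, hbn⟩, rfl⟩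

theorem coe_inf_eq_mul_mul_mul_of_split {K H X Y Z Xh Yh Xl Yl : Subgroup G}
    (hK : (K : Set G) = ↑(K ⊓ X) * ↑(K ⊓ Y) * ↑(K ⊓ X) * ↑(K ⊓ Z))
    (hX : ∀ u ∈ K ⊓ X, ∃ a ∈ K ⊓ H ⊓ Xh, ∃ b ∈ Xl, u = a * b)
    (hY : ∀ u ∈ K ⊓ Y, ∃ a ∈ K ⊓ H ⊓ Yh, ∃ b ∈ Yl, u = a * b)
    (hcomm : ∀ a, a ∈ Xh ∨ a ∈ Yh → ∀ b, b ∈ Xl ∨ b ∈ Yl → Commute a b)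
    (huniq : ∀ b₁ ∈ Xl, ∀ b₂ ∈ Yl, ∀ b₃ ∈ Xl, ∀ z ∈ Z,
      b₁ * b₂ * b₃ * z ∈ H → b₂ = 1 ∧ b₁ * b₃ = 1 ∧ z ∈ H) :
    ((K ⊓ H : Subgroup G) : Set G) =
      ↑(K ⊓ H ⊓ Xh) * ↑(K ⊓ H ⊓ Yh) * ↑(K ⊓ H ⊓ Xh) * ↑(K ⊓ H ⊓ (Z ⊓ H)) := by
  refine subset_antisymm (fun k hk => ?_) <| Subgroup.mul_subset
    (Subgroup.mul_subset
      (Subgroup.mul_subset (fun _ h => h.1) fun _ h => h.1) fun _ h => h.1)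
    fun _ h => h.1
  obtain ⟨hkK, hkH⟩ := Subgroup.mem_inf.1 hk
  rw [← SetLike.mem_coe, hK] at hkK
  obtain ⟨_, ⟨_, ⟨u, hu, v, hv, rfl⟩, w, hw, rfl⟩, z, hz, rfl⟩ := hkK
  obtain ⟨a₁, ha₁, b₁, hb₁, rfl⟩ := hX u hu
  obtain ⟨a₂, ha₂, b₂, hb₂, rfl⟩ := hY v hv
  obtain ⟨a₃, ha₃, b₃, hb₃, rfl⟩ := hX w hw
  have hk : a₁ * b₁ * (a₂ * b₂) * (a₃ * b₃) * z = a₁ * a₂ * a₃ * (b₁ * b₂ * b₃ * z) := by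
    simp only [mul_assoc, (hcomm a₂ (.inr ha₂.2) b₁ (.inl hb₁)).symm.left_comm,
      (hcomm a₃ (.inl ha₃.2) b₁ (.inl hb₁)).symm.left_comm,
      (hcomm a₃ (.inl ha₃.2) b₂ (.inr hb₂)).symm.left_comm]
  have hbz : b₁ * b₂ * b₃ * z ∈ H := by
    have ha : a₁ * a₂ * a₃ ∈ H := mul_mem (mul_mem ha₁.1.2 ha₂.1.2) ha₃.1.2
    simpa only [hk, inv_mul_cancel_left] using mul_mem (inv_mem ha) hkH
  obtain ⟨rfl, hb₁₃, hzH⟩ := huniq b₁ hb₁ b₂ hb₂ b₃ hb₃ z hz.2 hbz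
  refine ⟨a₁ * a₂ * a₃, ⟨a₁ * a₂, ⟨a₁, ha₁, a₂, ha₂, rfl⟩, a₃, ha₃, rfl⟩, z,
    ⟨⟨hz.1, hzH⟩, hz.2, hzH⟩, ?_⟩
  beta_reduce
  rw [hk, mul_one, hb₁₃, one_mul]

end Factorization

section Uniqueness

variable {H : Type*} [Group H] {A B N Z : Subgroup H}

theorem eq_one_of_mul_mul_eq_one_swap
    (huniq : ∀ a b n : H, a ∈ A → b ∈ B → n ∈ N → a * b * n = 1 → a = 1 ∧ b = 1 ∧ n = 1)
    {a b n : H} (ha : a ∈ A) (hb : b ∈ B) (hn : n ∈ N) (h : b * a * n = 1) : b = 1 ∧ a = 1 := by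
  have h' : a⁻¹ * b⁻¹ * n⁻¹ = 1 := by
    rw [← mul_inv_rev, mul_eq_one_iff_eq_inv.1 h, inv_inv, mul_inv_cancel]
  obtain ⟨ha', hb', -⟩ := huniq _ _ _ (inv_mem ha) (inv_mem hb) (inv_mem hn) h'
  exact ⟨inv_eq_one.1 hb', inv_eq_one.1 ha'⟩

theorem eq_one_of_mul_mul_mul_eq_one
    (huniq : ∀ a b n : H, a ∈ A → b ∈ B → n ∈ N → a * b * n = 1 → a = 1 ∧ b = 1 ∧ n = 1)
    (hZN : Z ≤ N) (hnorm : ∀ z ∈ Z, ∀ a ∈ A, z * a * z⁻¹ ∈ A)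
    {a b c z : H} (ha : a ∈ A) (hb : b ∈ B) (hc : c ∈ A) (hz : z ∈ Z) (h : a * b * c * z = 1) :
    b = 1 ∧ z = 1 ∧ c * a = 1 := by
  -- conjugating the rotated relation `c z a b = 1` by `z` puts it in the form `u⁺ u⁻ n = 1`
  have hc' : z⁻¹ * c * z ∈ A := by simpa using hnorm z⁻¹ (inv_mem hz) c hc
  have h' : z⁻¹ * c * z * a * b * z = 1 := by
    have hrot : c * z * (a * b) = 1 := mul_eq_one_comm.1 (by rw [← h]; group)
    calc z⁻¹ * c * z * a * b * z = z⁻¹ * (c * z * (a * b)) * z := by group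
      _ = 1 := by rw [hrot]; group
  obtain ⟨hca, rfl, rfl⟩ := huniq _ _ _ (mul_mem hc' ha) hb (hZN hz) h'
  exact ⟨rfl, rfl, by simpa using hca⟩

end Uniqueness

section RootGroups

variable {G : Type*} [Group G] {ι : Type*}

theorem le_genU (U : ι → Subgroup G) {s : Finset ι} {α : ι} (h : α ∈ s) : U α ≤ genU U s :=
  le_iSup₂ (f := fun β (_ : β ∈ s) => U β) α h

theorem genU_le {U : ι → Subgroup G} {s : Finset ι} {H : Subgroup G} (h : ∀ α ∈ s, U α ≤ H) :
    genU U s ≤ H :=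
  iSup₂_le h

end RootGroups

namespace APData

variable {G : Type*} [Group G] {ι : Type*} [DecidableEq ι] {D : RootData G ι} {LD : LeviDataW D}
  {Gl : Type*} [Group Gl] (AP : APData LD Gl)

theorem PhiH_subset : AP.PhiH ⊆ LD.PhiJ := AP.hpartJ ▸ Finset.subset_union_left

theorem PhiL'_subset : AP.PhiL' ⊆ LD.PhiJ := AP.hpartJ ▸ Finset.subset_union_right

theorem genU_PhiH_le (S : Finset ι) : genU D.U (AP.PhiH ∩ S) ≤ LD.L ⊓ genU D.U S :=
  genU_le fun α hα => le_inf (LD.hUL α (AP.PhiH_subset (Finset.mem_inter.1 hα).1))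
    (le_genU D.U (Finset.mem_inter.1 hα).2)

theorem genU_PhiL'_le (S : Finset ι) : genU D.U (AP.PhiL' ∩ S) ≤ LD.L :=
  genU_le fun α hα => LD.hUL α (AP.PhiL'_subset (Finset.mem_inter.1 hα).1)

theorem U_le_Gh_inf_genU {S : Finset ι} {α : ι} (hα : α ∈ AP.PhiH ∩ D.PhiRed ∩ S) :
    D.U α ≤ AP.Gh ⊓ genU D.U (AP.PhiH ∩ S) := by
  simp only [Finset.mem_inter] at hα
  exact le_inf (AP.hUGh α hα.1.1) (le_genU D.U (Finset.mem_inter.2 ⟨hα.1.1, hα.2⟩))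

theorem commute_of_mem {a b : G}
    (ha : a ∈ genU D.U (AP.PhiH ∩ D.PhiP) ∨ a ∈ genU D.U (AP.PhiH ∩ D.PhiM))
    (hb : b ∈ genU D.U (AP.PhiL' ∩ D.PhiP) ∨ b ∈ genU D.U (AP.PhiL' ∩ D.PhiM)) :
    Commute a b := by
  refine AP.hcomm a ?_ b ?_
  · rcases ha with ha | ha
    exacts [Set.subset_mul_left _ (one_mem _) ha, Set.subset_mul_right _ (one_mem _) ha]
  · rcases hb with hb | hb
    exacts [Set.subset_mul_left _ (one_mem _) hb, Set.subset_mul_right _ (one_mem _) hb]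

theorem coe_eq_one_of_pil_eq_one {S : Finset ι} (hS : S = D.PhiP ∨ S = D.PhiM) {x : LD.L}
    (hx : (x : G) ∈ genU D.U (AP.PhiL' ∩ S)) (h : AP.pil x = 1) : (x : G) = 1 := by
  rcases hS with rfl | rfl
  · exact congrArg Subtype.val (AP.hinj_p x 1 hx (one_mem _) (h.trans (map_one _).symm))
  · exact congrArg Subtype.val (AP.hinj_m x 1 hx (one_mem _) (h.trans (map_one _).symm))

theorem eq_one_of_mem_Gh {S : Finset ι} (hS : S = D.PhiP ∨ S = D.PhiM) {b : G}
    (hb : b ∈ genU D.U (AP.PhiL' ∩ S)) (hbGh : b ∈ AP.Gh) : b = 1 :=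
  AP.coe_eq_one_of_pil_eq_one hS (x := ⟨b, AP.genU_PhiL'_le S hb⟩) hb (AP.hGh_ker _ hbGh)

theorem eq_one_of_mul_mul_mem_Gh {b c n : G} (hb : b ∈ genU D.U (AP.PhiL' ∩ D.PhiP))
    (hc : c ∈ genU D.U (AP.PhiL' ∩ D.PhiM)) (hn : n ∈ D.N ⊓ LD.L) (h : b * c * n ∈ AP.Gh) :
    b = 1 ∧ c = 1 := by
  let b' : LD.L := ⟨b, AP.genU_PhiL'_le _ hb⟩
  let c' : LD.L := ⟨c, AP.genU_PhiL'_le _ hc⟩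
  have hpil := AP.hGh_ker (b' * c' * ⟨n, hn.2⟩) h
  rw [map_mul, map_mul] at hpil
  obtain ⟨hb', hc', -⟩ := AP.huniq _ _ _ ⟨b', hb, rfl⟩ ⟨c', hc, rfl⟩ ⟨_, hn, rfl⟩ hpil
  exact ⟨AP.coe_eq_one_of_pil_eq_one (.inl rfl) hb hb', AP.coe_eq_one_of_pil_eq_one (.inr rfl) hc hc'⟩

theorem eq_one_of_mul_mul_mem_Gh' {c b n : G} (hc : c ∈ genU D.U (AP.PhiL' ∩ D.PhiM))
    (hb : b ∈ genU D.U (AP.PhiL' ∩ D.PhiP)) (hn : n ∈ D.N ⊓ LD.L) (h : c * b * n ∈ AP.Gh) :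
    c = 1 ∧ b = 1 := by
  let b' : LD.L := ⟨b, AP.genU_PhiL'_le _ hb⟩
  let c' : LD.L := ⟨c, AP.genU_PhiL'_le _ hc⟩
  have hpil := AP.hGh_ker (c' * b' * ⟨n, hn.2⟩) h
  rw [map_mul, map_mul] at hpil
  obtain ⟨hc', hb'⟩ := eq_one_of_mul_mul_eq_one_swap AP.huniq ⟨b', hb, rfl⟩ ⟨c', hc, rfl⟩
    ⟨_, hn, rfl⟩ hpil
  exact ⟨AP.coe_eq_one_of_pil_eq_one (.inr rfl) hc hc', AP.coe_eq_one_of_pil_eq_one (.inl rfl) hb hb'⟩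

theorem eq_one_of_mul_mul_mul_mem_Gh {b₁ b₂ b₃ z : G} (hb₁ : b₁ ∈ genU D.U (AP.PhiL' ∩ D.PhiP))
    (hb₂ : b₂ ∈ genU D.U (AP.PhiL' ∩ D.PhiM)) (hb₃ : b₃ ∈ genU D.U (AP.PhiL' ∩ D.PhiP))
    (hz : z ∈ D.Z) (h : b₁ * b₂ * b₃ * z ∈ AP.Gh) : b₂ = 1 ∧ b₁ * b₃ = 1 ∧ z ∈ AP.Gh := by
  let b₁' : LD.L := ⟨b₁, AP.genU_PhiL'_le _ hb₁⟩
  let b₂' : LD.L := ⟨b₂, AP.genU_PhiL'_le _ hb₂⟩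
  let b₃' : LD.L := ⟨b₃, AP.genU_PhiL'_le _ hb₃⟩
  let z' : LD.L := ⟨z, LD.hZL hz⟩
  have hpil := AP.hGh_ker (b₁' * b₂' * b₃' * z') h
  rw [map_mul, map_mul, map_mul] at hpil
  obtain ⟨hb₂', hz', hb₃₁⟩ := eq_one_of_mul_mul_mul_eq_one AP.huniq AP.hZlNl AP.hZl_norm_p
    ⟨b₁', hb₁, rfl⟩ ⟨b₂', hb₂, rfl⟩ ⟨b₃', hb₃, rfl⟩ ⟨z', hz, rfl⟩ hpil
  rw [← map_mul] at hb₃₁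
  exact ⟨AP.coe_eq_one_of_pil_eq_one (.inr rfl) hb₂ hb₂',
    mul_eq_one_comm.1 (AP.coe_eq_one_of_pil_eq_one (.inl rfl) (x := b₃' * b₁') (mul_mem hb₃ hb₁) hb₃₁),
    AP.hker_Z z' hz hz'⟩

variable {S : Finset ι} {K T : Subgroup G}

theorem prodBij_append
    (hK : ∀ l : List ι, l.Nodup → (∀ a, a ∈ l ↔ a ∈ LD.PhiJ ∩ D.PhiRed ∩ S) → ProdBij D.U K T l)
    {l : List ι} (hl : l.Nodup) (hlA : ∀ a, a ∈ l ↔ a ∈ AP.PhiH ∩ D.PhiRed ∩ S) :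
    ProdBij D.U K T (l ++ (AP.PhiL' ∩ D.PhiRed ∩ S).toList) := by
  refine hK _ (hl.append (Finset.nodup_toList _) fun a ha ha' => ?_) fun a => ?_
  · rw [hlA, Finset.mem_inter, Finset.mem_inter] at ha
    rw [Finset.mem_toList, Finset.mem_inter, Finset.mem_inter] at ha'
    exact Finset.disjoint_left.1 AP.hdisjHL ha.1.1 ha'.1.1
  · simp only [List.mem_append, hlA, Finset.mem_toList, Finset.mem_inter, ← AP.hpartJ,
      Finset.mem_union]
    tauto

theorem exists_mul_of_mem_inf
    (hK : ∀ l : List ι, l.Nodup → (∀ a, a ∈ l ↔ a ∈ LD.PhiJ ∩ D.PhiRed ∩ S) → ProdBij D.U K T l)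
    {u : G} (hu : u ∈ K ⊓ T) :
    ∃ a ∈ K ⊓ AP.Gh ⊓ genU D.U (AP.PhiH ∩ S), ∃ b ∈ genU D.U (AP.PhiL' ∩ S), u = a * b := by
  obtain ⟨y, z, rfl⟩ := (AP.prodBij_append hK (Finset.nodup_toList _)
    fun _ => Finset.mem_toList).exists_eq_listProd_mul hu
  refine ⟨_, listProd_mem (fun α hα => ?_) y, _, listProd_mem (fun α hα => ?_) z, rfl⟩
  · rw [inf_assoc]
    exact inf_le_inf_left K (AP.U_le_Gh_inf_genU (Finset.mem_toList.1 hα))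
  · rw [Finset.mem_toList, Finset.mem_inter, Finset.mem_inter] at hα
    exact inf_le_right.trans (le_genU D.U (Finset.mem_inter.2 ⟨hα.1.1, hα.2⟩))

theorem prodBij_inf_Gh (hS : S = D.PhiP ∨ S = D.PhiM)
    (hK : ∀ l : List ι, l.Nodup → (∀ a, a ∈ l ↔ a ∈ LD.PhiJ ∩ D.PhiRed ∩ S) → ProdBij D.U K T l)
    (hT : genU D.U (AP.PhiH ∩ S) ≤ T)
    {l : List ι} (hl : l.Nodup) (hlA : ∀ a, a ∈ l ↔ a ∈ AP.PhiH ∩ D.PhiRed ∩ S) :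
    ProdBij D.U (K ⊓ AP.Gh) (genU D.U (AP.PhiH ∩ S)) l := by
  have hKT := AP.prodBij_append hK hl hlA
  have hU (α : ι) (hα : α ∈ l) := AP.U_le_Gh_inf_genU ((hlA α).1 hα)
  refine ⟨hKT.listProd_injective inf_le_left, subset_antisymm ?_ fun u hu => ?_⟩
  · rintro _ ⟨y, rfl⟩
    exact listProd_mem (fun α hα => inf_le_inf_left _ ((hU α hα).trans inf_le_right)) y
  obtain ⟨y, z, rfl⟩ := hKT.exists_eq_listProd_mul ⟨hu.1.1, hT hu.2⟩
  have hz : listProd D.U K z = 1 := by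
    refine AP.eq_one_of_mem_Gh hS (listProd_mem (fun α hα => ?_) z) ?_
    · rw [Finset.mem_toList, Finset.mem_inter, Finset.mem_inter] at hα
      exact inf_le_right.trans (le_genU D.U (Finset.mem_inter.2 ⟨hα.1.1, hα.2⟩))
    · have hy : listProd D.U K y ∈ AP.Gh :=
        listProd_mem (fun α hα => inf_le_right.trans ((hU α hα).trans inf_le_left)) y
      simpa using mul_mem (inv_mem hy) hu.1.2
  obtain ⟨y', hy'⟩ := exists_listProd_eq_of_le
    (fun α hα => inf_le_inf_left K ((hU α hα).trans inf_le_left)) y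
  exact ⟨y', hy'.trans (by rw [hz, mul_one])⟩

end APData

theorem stmt6_general {G : Type*} [Group G] {ι : Type*} [DecidableEq ι] {Gl : Type*} [Group Gl]
    (D : RootData G ι) (LD : LeviDataW D) (AP : APData LD Gl)
    (KL : Subgroup G) (h31 : LD.cond31L KL) :
    AP.cond31h (KL ⊓ AP.Gh) ∧ (LD.cond32L KL → AP.cond32h (KL ⊓ AP.Gh)) := by
  obtain ⟨hKmp, hKpm, hPBp, hPBm⟩ := h31
  have splitP (u : G) (hu : u ∈ KL ⊓ (LD.L ⊓ D.Up)) := AP.exists_mul_of_mem_inf hPBp hu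
  have splitM (u : G) (hu : u ∈ KL ⊓ (LD.L ⊓ D.Um)) := AP.exists_mul_of_mem_inf hPBm hu
  refine ⟨⟨?_, ?_, fun l hl hlA => AP.prodBij_inf_Gh (.inl rfl) hPBp (AP.genU_PhiH_le _) hl hlA,
    fun l hl hlA => AP.prodBij_inf_Gh (.inr rfl) hPBm (AP.genU_PhiH_le _) hl hlA⟩, fun h32 => ?_⟩
  · exact coe_inf_eq_mul_mul_of_split hKmp inf_le_left splitM splitP
      (fun a ha b hb => AP.commute_of_mem (.inl ha) (.inr hb))
      fun b hb c hc n hn => AP.eq_one_of_mul_mul_mem_Gh' hb hc hn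
  · exact coe_inf_eq_mul_mul_of_split hKpm inf_le_left splitP splitM
      (fun a ha b hb => AP.commute_of_mem (.inr ha) (.inl hb))
      fun b hb c hc n hn => AP.eq_one_of_mul_mul_mem_Gh hb hc hn
  · exact coe_inf_eq_mul_mul_mul_of_split h32 splitP splitM
      (fun a ha b hb => AP.commute_of_mem ha hb)
      fun _ hb₁ _ hb₂ _ hb₃ _ hz => AP.eq_one_of_mul_mul_mul_mem_Gh hb₁ hb₂ hb₃ hz

/-- If `K_L ≤ L` satisfies condition (3.1) with respect to `L`, then
`K_L ∩ G_h` satisfies condition (3.1) with respect to `G_h`; if moreover `K_L`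
satisfies condition (3.2) with respect to `L`, then `K_L ∩ G_h` also satisfies
condition (3.2) with respect to `G_h`. -/
theorem stmt6 {G : Type*} [Group G] {ι : Type*} [DecidableEq ι] {Gl : Type*} [Group Gl]
    (D : RootData G ι) (LD : LeviDataW D) (AP : APData LD Gl)
    (KL : Subgroup G) (hKLle : KL ≤ LD.L) (h31 : LD.cond31L KL) :
    AP.cond31h (KL ⊓ AP.Gh) ∧ (LD.cond32L KL → AP.cond32h (KL ⊓ AP.Gh)) :=
  stmt6_general D LD AP KL h31
end
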